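/- arXiv:1804.06577 — 6 statements merged into one kernel-verified Lean document; each statement's English description precedes it below -/
import Mathlib

section
/- Let m, n be reals with 0 < m < n and let Γ = {(2mi + mj, nj) : i, j ∈ ℤ}. Let S = {(x,y) ∈ ℝ² : |x| + |y| ≤ m}. Then for every nonzero v ∈ Γ, the interior of S and the interior of S + v are disjoint. -/
/-- The rhombic lattice `Γ = {(2mi + mj, nj) : i, j ∈ ℤ}` as a subset of `ℝ²`. -/
def rhombicLattice (m n : ℝ) : Set (ℝ × ℝ) :=
  {p | ∃ i j : ℤ, p = (2 * m * (i : ℝ) + m * (j : ℝ), n * (j : ℝ))}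

/-- Points of the interior of a translated diamond satisfy the strict inequality. -/
lemma aux_diamond (m : ℝ) (hm : 0 < m) (c p : ℝ × ℝ)
    (h : p ∈ interior {q : ℝ × ℝ | |(q - c).1| + |(q - c).2| ≤ m}) :
    |(p - c).1| + |(p - c).2| < m := by
  obtain ⟨ε, hε, hball⟩ := Metric.mem_nhds_iff.mp (mem_interior_iff_mem_nhds.mp h)
  set a := (p - c).1 with ha
  set b := (p - c).2 with hb
  by_cases h0 : |a| + |b| = 0
  · rw [h0]; exact hm
  have hpos : 0 < |a| + |b| :=
    lt_of_le_of_ne (by positivity) (Ne.symm h0)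
  set δ := ε / (2 * (|a| + |b|)) with hδ
  have hδpos : 0 < δ := by positivity
  set q : ℝ × ℝ := (p.1 + δ * a, p.2 + δ * b) with hq
  have hsum : δ * (|a| + |b|) = ε / 2 := by
    rw [hδ]; field_simp
  have hqball : q ∈ Metric.ball p ε := by
    rw [Metric.mem_ball, Prod.dist_eq]
    have h1 : dist q.1 p.1 = δ * |a| := by
      rw [Real.dist_eq, hq]
      simp [abs_mul, abs_of_pos hδpos]
    have h2 : dist q.2 p.2 = δ * |b| := by
      rw [Real.dist_eq, hq]
      simp [abs_mul, abs_of_pos hδpos]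
    rw [h1, h2]
    have hA : δ * |a| ≤ ε / 2 := by nlinarith [abs_nonneg a, abs_nonneg b]
    have hB : δ * |b| ≤ ε / 2 := by nlinarith [abs_nonneg a, abs_nonneg b]
    exact max_lt (by linarith) (by linarith)
  have hqS := hball hqball
  simp only [Set.mem_setOf_eq] at hqS
  have e1 : (q - c).1 = (1 + δ) * a := by
    rw [hq, ha]; simp [Prod.fst_sub]; ring
  have e2 : (q - c).2 = (1 + δ) * b := by
    rw [hq, hb]; simp [Prod.snd_sub]; ring
  rw [e1, e2, abs_mul, abs_mul, abs_of_pos (by linarith : (0:ℝ) < 1 + δ)] at hqS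
  nlinarith [abs_nonneg a, abs_nonneg b]

/-- For `0 < m < n` and `Γ` the rhombic lattice, the diamond
`S = {(x,y) : |x| + |y| ≤ m}` has interior disjoint from the interior of each of its
translates by nonzero lattice vectors. -/
theorem stmt_2 (m n : ℝ) (hm : 0 < m) (hmn : m < n)
    (S : Set (ℝ × ℝ)) (hS : S = {p : ℝ × ℝ | |p.1| + |p.2| ≤ m}) :
    ∀ v ∈ rhombicLattice m n, v ≠ 0 →
      interior S ∩ interior ((fun p => p + v) '' S) = ∅ := by
  rintro v ⟨i, j, hvij⟩ hv0
  have hS0 : S = {q : ℝ × ℝ | |(q - (0:ℝ×ℝ)).1| + |(q - (0:ℝ×ℝ)).2| ≤ m} := by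
    rw [hS]; simp
  have himg : (fun p => p + v) '' S = {q : ℝ × ℝ | |(q - v).1| + |(q - v).2| ≤ m} := by
    rw [hS]; ext q
    simp only [Set.mem_image, Set.mem_setOf_eq]
    constructor
    · rintro ⟨s, hs, rfl⟩
      simpa using hs
    · intro h
      exact ⟨q - v, h, by abel⟩
  ext p
  simp only [Set.mem_inter_iff, Set.mem_empty_iff_false, iff_false]
  rintro ⟨h1, h2⟩
  rw [hS0] at h1
  rw [himg] at h2
  have hfa := aux_diamond m hm 0 p h1
  have hfb := aux_diamond m hm v p h2
  simp only [sub_zero] at hfa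
  have hV1 : v.1 = 2 * m * (i:ℝ) + m * (j:ℝ) := by rw [hvij]
  have hV2 : v.2 = n * (j:ℝ) := by rw [hvij]
  have hp1 : (p - v).1 = p.1 - v.1 := rfl
  have hp2 : (p - v).2 = p.2 - v.2 := rfl
  rw [hp1, hp2] at hfb
  have k1 : |v.1| - |p.1| ≤ |v.1 - p.1| := abs_sub_abs_le_abs_sub v.1 p.1
  have k2 : |v.2| - |p.2| ≤ |v.2 - p.2| := abs_sub_abs_le_abs_sub v.2 p.2
  rw [abs_sub_comm v.1 p.1] at k1
  rw [abs_sub_comm v.2 p.2] at k2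
  have key : |v.1| + |v.2| < 2 * m := by linarith
  rw [hV1, hV2] at key
  by_cases hj : j = 0
  · subst hj
    have hi : i ≠ 0 := by
      intro hi
      apply hv0
      rw [hvij, hi]
      norm_num [Prod.ext_iff]
    have hi1 : (1:ℝ) ≤ |(i:ℝ)| := by
      exact_mod_cast Int.one_le_abs hi
    simp only [Int.cast_zero, mul_zero, add_zero, abs_zero] at key
    rw [abs_mul, abs_mul] at key
    rw [(by norm_num : |(2:ℝ)| = 2), abs_of_pos hm] at key
    nlinarith [mul_le_mul_of_nonneg_left hi1 (le_of_lt hm)]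
  · have hj1 : (1:ℝ) ≤ |(j:ℝ)| := by
      exact_mod_cast Int.one_le_abs hj
    have hYn : n * 1 ≤ |n * (j:ℝ)| := by
      rw [abs_mul, abs_of_pos (by linarith : (0:ℝ) < n)]
      exact mul_le_mul_of_nonneg_left hj1 (by linarith)
    have hXeq : 2 * m * (i:ℝ) + m * (j:ℝ) = m * ((2 * i + j : ℤ) : ℝ) := by
      push_cast; ring
    by_cases h2i : 2 * i + j = 0
    · -- v.1 = 0, j = -2i with i ≠ 0, so |j| ≥ 2
      have hj2 : (2:ℝ) ≤ |(j:ℝ)| := by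
        have hn2 : 2 ≤ j.natAbs := by omega
        have : (2:ℤ) ≤ |j| := by rw [Int.abs_eq_natAbs]; exact_mod_cast hn2
        exact_mod_cast this
      have hY2 : n * 2 ≤ |n * (j:ℝ)| := by
        rw [abs_mul, abs_of_pos (by linarith : (0:ℝ) < n)]
        exact mul_le_mul_of_nonneg_left hj2 (by linarith)
      nlinarith [abs_nonneg (2 * m * (i:ℝ) + m * (j:ℝ))]
    · have hk1 : (1:ℝ) ≤ |((2 * i + j : ℤ) : ℝ)| := by
        exact_mod_cast Int.one_le_abs h2i
      have hXm : m * 1 ≤ |2 * m * (i:ℝ) + m * (j:ℝ)| := by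
        rw [hXeq, abs_mul, abs_of_pos hm]
        exact mul_le_mul_of_nonneg_left hk1 (by linarith)
      nlinarith
end

section
/- Let m, n be reals with 0 < m < n ≤ 3m and let Γ = {(2mi + mj, nj) : i, j ∈ ℤ}. Let A = {(x,y) ∈ ℝ² : m ≤ x + y ≤ n and 2m − n ≤ x − y ≤ m} (the square XYVU). Then (i) α(A) + (2m,0) = A, where α(x,y) = (−x,y); and (ii) for every γ ∈ {id, −id, α, −α} and every v ∈ Γ, if the interior of γ(A) + v meets the interior of A, then γ(A) + v = A. -/
/-- The reflection `α(x,y) = (−x,y)`. -/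
def alphaMap : ℝ × ℝ → ℝ × ℝ := fun p => (-p.1, p.2)

lemma strict_of_interior (a b c d : ℝ) {p : ℝ × ℝ}
    (hp : p ∈ interior {p : ℝ × ℝ | a ≤ p.1 + p.2 ∧ p.1 + p.2 ≤ b ∧
      c ≤ p.1 - p.2 ∧ p.1 - p.2 ≤ d}) :
    a < p.1 + p.2 ∧ p.1 + p.2 < b ∧ c < p.1 - p.2 ∧ p.1 - p.2 < d := by
  obtain ⟨ε, hε, hball⟩ := Metric.isOpen_iff.mp isOpen_interior p hp
  have hsub : Metric.ball p ε ⊆ {p : ℝ × ℝ | a ≤ p.1 + p.2 ∧ p.1 + p.2 ≤ b ∧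
      c ≤ p.1 - p.2 ∧ p.1 - p.2 ≤ d} := hball.trans interior_subset
  have hd1 : ((p.1 + ε/2, p.2) : ℝ × ℝ) ∈ Metric.ball p ε := by
    simp only [Metric.mem_ball, Prod.dist_eq, Real.dist_eq]
    simp only [add_sub_cancel_left, sub_self, abs_zero]
    rw [abs_of_nonneg (by linarith)]
    simp; linarith
  have hd2 : ((p.1 - ε/2, p.2) : ℝ × ℝ) ∈ Metric.ball p ε := by
    simp only [Metric.mem_ball, Prod.dist_eq, Real.dist_eq]
    simp only [sub_sub_cancel_left, sub_self, abs_zero, abs_neg]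
    rw [abs_of_nonneg (by linarith)]
    simp; linarith
  have h1 := hsub hd1
  have h2 := hsub hd2
  simp only [Set.mem_setOf_eq] at h1 h2
  exact ⟨by linarith [h2.1], by linarith [h1.2.1], by linarith [h2.2.2.1],
    by linarith [h1.2.2.2]⟩

lemma overlap_point {A : Set (ℝ × ℝ)} (f g : ℝ × ℝ → ℝ × ℝ)
    (hf : Continuous f) (hg : Continuous g)
    (hgf : ∀ p, g (f p) = p) (hfg : ∀ p, f (g p) = p)
    (hne : (interior (f '' A) ∩ interior A).Nonempty) :
    ∃ p, p ∈ interior A ∧ f p ∈ interior A := by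
  obtain ⟨q, hq1, hq2⟩ := hne
  let H : ℝ × ℝ ≃ₜ ℝ × ℝ := ⟨⟨f, g, hgf, hfg⟩, hf, hg⟩
  have himg : f '' A = H '' A := rfl
  rw [himg, ← H.image_interior] at hq1
  obtain ⟨p, hp, hfp⟩ := hq1
  exact ⟨p, hp, by rw [show f p = H p from rfl, hfp]; exact hq2⟩

/-- For `0 < m < n ≤ 3m`, let `A = {(x,y) : m ≤ x+y ≤ n, 2m−n ≤ x−y ≤ m}`
(the square `XYVU`). Then (i) `α(A) + (2m,0) = A`, and (ii) among all images of `A` under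
the point group `{id, −id, α, −α}` translated by lattice vectors, any one whose interior
meets the interior of `A` equals `A`. -/
theorem stmt_3 (m n : ℝ) (hm : 0 < m) (hmn : m < n) (hn3 : n ≤ 3 * m)
    (A : Set (ℝ × ℝ))
    (hA : A = {p : ℝ × ℝ | m ≤ p.1 + p.2 ∧ p.1 + p.2 ≤ n ∧
                2 * m - n ≤ p.1 - p.2 ∧ p.1 - p.2 ≤ m}) :
    (fun p => p + ((2 * m : ℝ), (0 : ℝ))) '' (alphaMap '' A) = A ∧
    ∀ γ ∈ ({fun p => p, fun p => -p, alphaMap, fun p => -(alphaMap p)} :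
        Set (ℝ × ℝ → ℝ × ℝ)),
      ∀ v ∈ rhombicLattice m n,
        (interior ((fun p => p + v) '' (γ '' A)) ∩ interior A).Nonempty →
          (fun p => p + v) '' (γ '' A) = A := by
  subst hA
  set A := {p : ℝ × ℝ | m ≤ p.1 + p.2 ∧ p.1 + p.2 ≤ n ∧
      2 * m - n ≤ p.1 - p.2 ∧ p.1 - p.2 ≤ m} with hAdef
  have hi : (fun p => p + ((2 * m : ℝ), (0 : ℝ))) '' (alphaMap '' A) = A := by
    rw [Set.image_image]
    ext p
    simp only [hAdef, Set.mem_image, Set.mem_setOf_eq, alphaMap, Prod.mk_add_mk]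
    constructor
    · rintro ⟨⟨x, y⟩, hq, rfl⟩
      obtain ⟨h1, h2, h3, h4⟩ := hq
      simp only at h1 h2 h3 h4
      refine ⟨by simp; linarith, by simp; linarith, by simp; linarith, by simp; linarith⟩
    · intro hp
      obtain ⟨h1, h2, h3, h4⟩ := hp
      refine ⟨(2 * m - p.1, p.2), ⟨by simp; linarith, by simp; linarith,
        by simp; linarith, by simp; linarith⟩, ?_⟩
      simp only
      ext <;> simp
  refine ⟨hi, ?_⟩
  intro γ hγ v hv hne
  obtain ⟨i, j, rfl⟩ := hv
  simp only [Set.mem_insert_iff, Set.mem_singleton_iff] at hγ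
  rw [Set.image_image] at hne
  rcases hγ with rfl | rfl | rfl | rfl
  · -- γ = id
    obtain ⟨⟨x, y⟩, hp, hfp⟩ := overlap_point
      (fun p => p + (2 * m * (i : ℝ) + m * (j : ℝ), n * (j : ℝ)))
      (fun p => p - (2 * m * (i : ℝ) + m * (j : ℝ), n * (j : ℝ)))
      (by fun_prop) (by fun_prop) (by intro p; simp) (by intro p; simp) hne
    have h1 := strict_of_interior m n (2 * m - n) m hp
    have h2 := strict_of_interior m n (2 * m - n) m hfp
    simp only [Prod.mk_add_mk] at h2
    obtain ⟨a1, a2, a3, a4⟩ := h1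
    obtain ⟨b1, b2, b3, b4⟩ := h2
    simp only at a1 a2 a3 a4 b1 b2 b3 b4
    have hnj1 : n * (j : ℝ) < n - m := by linarith
    have hnj2 : -(n - m) < n * (j : ℝ) := by linarith
    have hj : j = 0 := by
      have c1 : (j : ℝ) < 1 := by nlinarith
      have c2 : (-1 : ℝ) < (j : ℝ) := by nlinarith
      have d1 : j < 1 := by exact_mod_cast c1
      have d2 : -1 < j := by exact_mod_cast c2
      omega
    subst hj
    simp only [Int.cast_zero, mul_zero, add_zero] at b1 b2 b3 b4
    have hmi1 : 2 * m * (i : ℝ) < n - m := by linarith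
    have hmi2 : -(n - m) < 2 * m * (i : ℝ) := by linarith
    have hii : i = 0 := by
      have c1 : (i : ℝ) < 1 := by nlinarith
      have c2 : (-1 : ℝ) < (i : ℝ) := by nlinarith
      have d1 : i < 1 := by exact_mod_cast c1
      have d2 : -1 < i := by exact_mod_cast c2
      omega
    subst hii
    have hv0 : ((2 * m * ((0 : ℤ) : ℝ) + m * ((0 : ℤ) : ℝ), n * ((0 : ℤ) : ℝ)) : ℝ × ℝ)
        = 0 := by
      simp [Prod.ext_iff]
    rw [Set.image_image, hv0]
    simp
  · -- γ = -id
    obtain ⟨⟨x, y⟩, hp, hfp⟩ := overlap_point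
      (fun p => -p + (2 * m * (i : ℝ) + m * (j : ℝ), n * (j : ℝ)))
      (fun p => -(p - (2 * m * (i : ℝ) + m * (j : ℝ), n * (j : ℝ))))
      (by fun_prop) (by fun_prop) (by intro p; simp) (by intro p; simp) hne
    have h1 := strict_of_interior m n (2 * m - n) m hp
    have h2 := strict_of_interior m n (2 * m - n) m hfp
    simp only [Prod.neg_mk, Prod.mk_add_mk] at h2
    obtain ⟨a1, a2, a3, a4⟩ := h1
    obtain ⟨b1, b2, b3, b4⟩ := h2
    simp only at a1 a2 a3 a4 b1 b2 b3 b4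
    have hnj1 : 0 < n * (j : ℝ) := by linarith
    have hnj2 : n * (j : ℝ) < 2 * n - 2 * m := by linarith
    have hj : j = 1 := by
      have c1 : (0 : ℝ) < (j : ℝ) := by nlinarith
      have c2 : (j : ℝ) < 2 := by nlinarith
      have d1 : (0 : ℤ) < j := by exact_mod_cast c1
      have d2 : j < 2 := by exact_mod_cast c2
      omega
    subst hj
    simp only [Int.cast_one, mul_one] at b1 b2 b3 b4
    have hmi1 : 2 * m * (i : ℝ) < n - m := by linarith
    have hmi2 : 3 * m - n < 2 * m * (i : ℝ) := by linarith
    exfalso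
    have c1 : (i : ℝ) < 1 := by nlinarith
    have c2 : (0 : ℝ) < (i : ℝ) := by nlinarith
    have d1 : i < 1 := by exact_mod_cast c1
    have d2 : (0 : ℤ) < i := by exact_mod_cast c2
    omega
  · -- γ = α
    obtain ⟨⟨x, y⟩, hp, hfp⟩ := overlap_point
      (fun p => alphaMap p + (2 * m * (i : ℝ) + m * (j : ℝ), n * (j : ℝ)))
      (fun p => alphaMap (p - (2 * m * (i : ℝ) + m * (j : ℝ), n * (j : ℝ))))
      (by unfold alphaMap; fun_prop) (by unfold alphaMap; fun_prop)
      (by intro p; simp [alphaMap]) (by intro p; simp [alphaMap]) hne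
    have h1 := strict_of_interior m n (2 * m - n) m hp
    have h2 := strict_of_interior m n (2 * m - n) m hfp
    simp only [alphaMap, Prod.mk_add_mk] at h2
    obtain ⟨a1, a2, a3, a4⟩ := h1
    obtain ⟨b1, b2, b3, b4⟩ := h2
    simp only at a1 a2 a3 a4 b1 b2 b3 b4
    have hnj1 : n * (j : ℝ) < n - m := by linarith
    have hnj2 : -(n - m) < n * (j : ℝ) := by linarith
    have hj : j = 0 := by
      have c1 : (j : ℝ) < 1 := by nlinarith
      have c2 : (-1 : ℝ) < (j : ℝ) := by nlinarith
      have d1 : j < 1 := by exact_mod_cast c1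
      have d2 : -1 < j := by exact_mod_cast c2
      omega
    subst hj
    simp only [Int.cast_zero, mul_zero, add_zero] at b1 b2 b3 b4
    have hmi1 : 3 * m - n < 2 * m * (i : ℝ) := by linarith
    have hmi2 : 2 * m * (i : ℝ) < m + n := by linarith
    have hii : i = 1 := by
      have c1 : (0 : ℝ) < (i : ℝ) := by nlinarith
      have c2 : (i : ℝ) < 2 := by nlinarith
      have d1 : (0 : ℤ) < i := by exact_mod_cast c1
      have d2 : i < 2 := by exact_mod_cast c2
      omega
    subst hii
    have hv0 : ((2 * m * ((1 : ℤ) : ℝ) + m * ((0 : ℤ) : ℝ), n * ((0 : ℤ) : ℝ)) : ℝ × ℝ)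
        = ((2 * m : ℝ), (0 : ℝ)) := by
      simp
    rw [hv0]
    exact hi
  · -- γ = -α
    obtain ⟨⟨x, y⟩, hp, hfp⟩ := overlap_point
      (fun p => -(alphaMap p) + (2 * m * (i : ℝ) + m * (j : ℝ), n * (j : ℝ)))
      (fun p => -(alphaMap (p - (2 * m * (i : ℝ) + m * (j : ℝ), n * (j : ℝ)))))
      (by unfold alphaMap; fun_prop) (by unfold alphaMap; fun_prop)
      (by intro p; simp [alphaMap]) (by intro p; simp [alphaMap]) hne
    have h1 := strict_of_interior m n (2 * m - n) m hp
    have h2 := strict_of_interior m n (2 * m - n) m hfp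
    simp only [alphaMap, Prod.neg_mk, Prod.mk_add_mk, neg_neg] at h2
    obtain ⟨a1, a2, a3, a4⟩ := h1
    obtain ⟨b1, b2, b3, b4⟩ := h2
    simp only at a1 a2 a3 a4 b1 b2 b3 b4
    have hnj1 : 0 < n * (j : ℝ) := by linarith
    have hnj2 : n * (j : ℝ) < 2 * n - 2 * m := by linarith
    have hj : j = 1 := by
      have c1 : (0 : ℝ) < (j : ℝ) := by nlinarith
      have c2 : (j : ℝ) < 2 := by nlinarith
      have d1 : (0 : ℤ) < j := by exact_mod_cast c1
      have d2 : j < 2 := by exact_mod_cast c2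
      omega
    subst hj
    simp only [Int.cast_one, mul_one] at b1 b2 b3 b4
    have hmi1 : m - n < 2 * m * (i : ℝ) := by linarith
    have hmi2 : 2 * m * (i : ℝ) < n - 3 * m := by linarith
    exfalso
    have c1 : (-1 : ℝ) < (i : ℝ) := by nlinarith
    have c2 : (i : ℝ) < 0 := by nlinarith
    have d1 : -1 < i := by exact_mod_cast c1
    have d2 : i < 0 := by exact_mod_cast c2
    omega
end

section
/- Let m, n be reals with 0 < m < n ≤ 3m and let Γ = {(2mi + mj, nj) : i, j ∈ ℤ}. Let B = {(x,y) ∈ ℝ² : m ≤ x + y ≤ n and −m ≤ x − y ≤ 2m − n} (the rectangle WUVZ). Then (i) −B + (m,n) = B; and (ii) for every γ ∈ {id, −id, α, −α} and every v ∈ Γ, if the interior of γ(B) + v meets the interior of B, then γ(B) + v = B. -/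
lemma interior_halfplane {a b c : ℝ} (hab : ((a, b) : ℝ × ℝ) ≠ 0) {s : Set (ℝ × ℝ)}
    (hs : s ⊆ {q : ℝ × ℝ | c ≤ a * q.1 + b * q.2}) {p : ℝ × ℝ}
    (hp : p ∈ interior s) : c < a * p.1 + b * p.2 := by
  rw [mem_interior_iff_mem_nhds, Metric.mem_nhds_iff] at hp
  obtain ⟨ε, hε, hball⟩ := hp
  have hr : (0:ℝ) < ‖((a, b) : ℝ × ℝ)‖ := norm_pos_iff.mpr hab
  set t : ℝ := ε / (2 * ‖((a, b) : ℝ × ℝ)‖) with ht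
  have htpos : 0 < t := by positivity
  have hmem : p - t • ((a, b) : ℝ × ℝ) ∈ Metric.ball p ε := by
    rw [Metric.mem_ball, dist_self_sub_left, norm_smul, Real.norm_eq_abs, abs_of_pos htpos]
    have : t * ‖((a, b) : ℝ × ℝ)‖ = ε / 2 := by
      rw [ht]; field_simp
    rw [this]; linarith
  have h2 := hs (hball hmem)
  simp only [Set.mem_setOf_eq, Prod.fst_sub, Prod.snd_sub, Prod.smul_fst, Prod.smul_snd,
    smul_eq_mul] at h2
  have h' : a ≠ 0 ∨ b ≠ 0 := by
    by_contra hc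
    push_neg at hc
    exact hab (by simp [Prod.ext_iff, hc.1, hc.2])
  have hab2 : 0 < a ^ 2 + b ^ 2 := by rcases h' with h | h <;> positivity
  nlinarith [mul_pos htpos hab2]

lemma interior_rect {c1 c2 c3 c4 : ℝ} {s : Set (ℝ × ℝ)}
    (hs : s ⊆ {q : ℝ × ℝ | c1 ≤ q.1 + q.2 ∧ q.1 + q.2 ≤ c2 ∧ c3 ≤ q.1 - q.2 ∧ q.1 - q.2 ≤ c4})
    {p : ℝ × ℝ} (hp : p ∈ interior s) :
    c1 < p.1 + p.2 ∧ p.1 + p.2 < c2 ∧ c3 < p.1 - p.2 ∧ p.1 - p.2 < c4 := by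
  have h1 := interior_halfplane (a := 1) (b := 1) (c := c1)
    (by norm_num [Prod.ext_iff])
    (fun q hq => by simp only [Set.mem_setOf_eq]; linarith [(hs hq).1]) hp
  have h2 := interior_halfplane (a := -1) (b := -1) (c := -c2)
    (by norm_num [Prod.ext_iff])
    (fun q hq => by simp only [Set.mem_setOf_eq]; linarith [(hs hq).2.1]) hp
  have h3 := interior_halfplane (a := 1) (b := -1) (c := c3)
    (by norm_num [Prod.ext_iff])
    (fun q hq => by simp only [Set.mem_setOf_eq]; linarith [(hs hq).2.2.1]) hp
  have h4 := interior_halfplane (a := -1) (b := 1) (c := -c4)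
    (by norm_num [Prod.ext_iff])
    (fun q hq => by simp only [Set.mem_setOf_eq]; linarith [(hs hq).2.2.2]) hp
  exact ⟨by linarith, by linarith, by linarith, by linarith⟩

lemma int_between {c : ℝ} (hc : 0 < c) {j lo hi : ℤ}
    (h1 : c * (lo : ℝ) < c * (j : ℝ)) (h2 : c * (j : ℝ) < c * (hi : ℝ)) :
    lo < j ∧ j < hi :=
  ⟨by exact_mod_cast (mul_lt_mul_iff_right₀ hc).mp h1, by exact_mod_cast (mul_lt_mul_iff_right₀ hc).mp h2⟩



/-- For `0 < m < n ≤ 3m`, let `B = {(x,y) : m ≤ x+y ≤ n, −m ≤ x−y ≤ 2m−n}`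
(the rectangle `WUVZ`). Then (i) `−B + (m,n) = B`, and (ii) among all images of `B` under
the point group `{id, −id, α, −α}` translated by lattice vectors, any one whose interior
meets the interior of `B` equals `B`. -/
theorem stmt_4 (m n : ℝ) (hm : 0 < m) (hmn : m < n) (hn3 : n ≤ 3 * m)
    (B : Set (ℝ × ℝ))
    (hB : B = {p : ℝ × ℝ | m ≤ p.1 + p.2 ∧ p.1 + p.2 ≤ n ∧
                -m ≤ p.1 - p.2 ∧ p.1 - p.2 ≤ 2 * m - n}) :
    (fun p => p + ((m : ℝ), (n : ℝ))) '' ((fun p => -p) '' B) = B ∧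
    ∀ γ ∈ ({fun p => p, fun p => -p, alphaMap, fun p => -(alphaMap p)} :
        Set (ℝ × ℝ → ℝ × ℝ)),
      ∀ v ∈ rhombicLattice m n,
        (interior ((fun p => p + v) '' (γ '' B)) ∩ interior B).Nonempty →
          (fun p => p + v) '' (γ '' B) = B := by
  have hpart1 : (fun p => p + ((m : ℝ), (n : ℝ))) '' ((fun p => -p) '' B) = B := by
    ext q
    simp only [Set.mem_image, hB, Set.mem_setOf_eq]
    constructor
    · rintro ⟨x, ⟨p, hp, rfl⟩, rfl⟩
      obtain ⟨h1, h2, h3, h4⟩ := hp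
      simp only [Prod.fst_add, Prod.snd_add, Prod.fst_neg, Prod.snd_neg]
      refine ⟨by linarith, by linarith, by linarith, by linarith⟩
    · intro hq
      obtain ⟨h1, h2, h3, h4⟩ := hq
      refine ⟨q - (m, n), ⟨(m, n) - q, ?_, neg_sub _ _⟩, by abel⟩
      simp only [Prod.fst_sub, Prod.snd_sub]
      refine ⟨by linarith, by linarith, by linarith, by linarith⟩
  refine ⟨hpart1, ?_⟩
  intro γ hγ v hv hne
  simp only [Set.mem_insert_iff, Set.mem_singleton_iff] at hγ
  obtain ⟨i, j, rfl⟩ := hv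
  obtain ⟨p0, hp1, hp2⟩ := hne
  obtain ⟨b1, b2, b3, b4⟩ := interior_rect hB.le hp2
  rcases hγ with rfl | rfl | rfl | rfl
  · -- γ = id
    have hsub : (fun p => p + ((2 * m * (i : ℝ) + m * (j : ℝ), n * (j : ℝ)) : ℝ × ℝ)) ''
        ((fun p => p) '' B) ⊆
        {q : ℝ × ℝ | m + (2 * m * (i : ℝ) + m * (j : ℝ) + n * (j : ℝ)) ≤ q.1 + q.2 ∧
          q.1 + q.2 ≤ n + (2 * m * (i : ℝ) + m * (j : ℝ) + n * (j : ℝ)) ∧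
          -m + (2 * m * (i : ℝ) + m * (j : ℝ) - n * (j : ℝ)) ≤ q.1 - q.2 ∧
          q.1 - q.2 ≤ 2 * m - n + (2 * m * (i : ℝ) + m * (j : ℝ) - n * (j : ℝ))} := by
      rintro q ⟨x, ⟨p, hp, rfl⟩, rfl⟩
      rw [hB] at hp
      obtain ⟨h1, h2, h3, h4⟩ := hp
      refine ⟨?_, ?_, ?_, ?_⟩ <;> simp only [Prod.fst_add, Prod.snd_add] <;> linarith
    obtain ⟨a1, a2, a3, a4⟩ := interior_rect hsub hp1
    obtain ⟨hj1, hj2⟩ := int_between (c := 2 * n) (lo := -1) (hi := 1) (by linarith)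
      (by push_cast; linarith) (by push_cast; linarith)
    have hj0 : j = 0 := by omega
    subst hj0
    push_cast at a1 a2 a3 a4
    obtain ⟨hi1, hi2⟩ := int_between (c := 2 * m) (lo := -1) (hi := 1) (by linarith)
      (by push_cast; linarith) (by push_cast; linarith)
    have hi0 : i = 0 := by omega
    subst hi0
    have hv0 : ((2 * m * ((0 : ℤ) : ℝ) + m * ((0 : ℤ) : ℝ), n * ((0 : ℤ) : ℝ)) : ℝ × ℝ)
        = (0, 0) := by norm_num
    rw [hv0]
    ext q
    simp only [Set.mem_image]
    constructor
    · rintro ⟨x, ⟨p, hp, rfl⟩, rfl⟩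
      have : p + ((0 : ℝ), (0 : ℝ)) = p := by simp [Prod.ext_iff]
      rwa [this]
    · intro hq
      exact ⟨q, ⟨q, hq, rfl⟩, by simp [Prod.ext_iff]⟩
  · -- γ = -id
    have hsub : (fun p => p + ((2 * m * (i : ℝ) + m * (j : ℝ), n * (j : ℝ)) : ℝ × ℝ)) ''
        ((fun p => -p) '' B) ⊆
        {q : ℝ × ℝ | (2 * m * (i : ℝ) + m * (j : ℝ) + n * (j : ℝ)) - n ≤ q.1 + q.2 ∧
          q.1 + q.2 ≤ (2 * m * (i : ℝ) + m * (j : ℝ) + n * (j : ℝ)) - m ∧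
          (2 * m * (i : ℝ) + m * (j : ℝ) - n * (j : ℝ)) - (2 * m - n) ≤ q.1 - q.2 ∧
          q.1 - q.2 ≤ (2 * m * (i : ℝ) + m * (j : ℝ) - n * (j : ℝ)) + m} := by
      rintro q ⟨x, ⟨p, hp, rfl⟩, rfl⟩
      rw [hB] at hp
      obtain ⟨h1, h2, h3, h4⟩ := hp
      refine ⟨?_, ?_, ?_, ?_⟩ <;>
        simp only [Prod.fst_add, Prod.snd_add, Prod.fst_neg, Prod.snd_neg] <;> linarith
    obtain ⟨a1, a2, a3, a4⟩ := interior_rect hsub hp1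
    obtain ⟨hj1, hj2⟩ := int_between (c := 2 * n) (lo := 0) (hi := 2) (by linarith)
      (by push_cast; linarith) (by push_cast; linarith)
    have hj0 : j = 1 := by omega
    subst hj0
    push_cast at a1 a2 a3 a4
    obtain ⟨hi1, hi2⟩ := int_between (c := 2 * m) (lo := -1) (hi := 1) (by linarith)
      (by push_cast; linarith) (by push_cast; linarith)
    have hi0 : i = 0 := by omega
    subst hi0
    have hv1 : ((2 * m * ((0 : ℤ) : ℝ) + m * ((1 : ℤ) : ℝ), n * ((1 : ℤ) : ℝ)) : ℝ × ℝ)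
        = (m, n) := by norm_num
    rw [hv1]
    exact hpart1
  · -- γ = α
    have hsub : (fun p => p + ((2 * m * (i : ℝ) + m * (j : ℝ), n * (j : ℝ)) : ℝ × ℝ)) ''
        (alphaMap '' B) ⊆
        {q : ℝ × ℝ | (2 * m * (i : ℝ) + m * (j : ℝ) + n * (j : ℝ)) - (2 * m - n) ≤ q.1 + q.2 ∧
          q.1 + q.2 ≤ (2 * m * (i : ℝ) + m * (j : ℝ) + n * (j : ℝ)) + m ∧
          (2 * m * (i : ℝ) + m * (j : ℝ) - n * (j : ℝ)) - n ≤ q.1 - q.2 ∧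
          q.1 - q.2 ≤ (2 * m * (i : ℝ) + m * (j : ℝ) - n * (j : ℝ)) - m} := by
      rintro q ⟨x, ⟨p, hp, rfl⟩, rfl⟩
      rw [hB] at hp
      obtain ⟨h1, h2, h3, h4⟩ := hp
      refine ⟨?_, ?_, ?_, ?_⟩ <;>
        simp only [alphaMap, Prod.fst_add, Prod.snd_add] <;> linarith
    obtain ⟨a1, a2, a3, a4⟩ := interior_rect hsub hp1
    obtain ⟨hj1, hj2⟩ := int_between (c := 2 * n) (lo := -1) (hi := 1) (by linarith)
      (by push_cast; linarith) (by push_cast; linarith)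
    have hj0 : j = 0 := by omega
    subst hj0
    push_cast at a1 a2 a3 a4
    exfalso
    obtain ⟨hi1, hi2⟩ := int_between (c := 2 * m) (lo := 0) (hi := 1) (by linarith)
      (by push_cast; linarith) (by push_cast; linarith)
    omega
  · -- γ = -α
    have hsub : (fun p => p + ((2 * m * (i : ℝ) + m * (j : ℝ), n * (j : ℝ)) : ℝ × ℝ)) ''
        ((fun p => -(alphaMap p)) '' B) ⊆
        {q : ℝ × ℝ | (2 * m * (i : ℝ) + m * (j : ℝ) + n * (j : ℝ)) - m ≤ q.1 + q.2 ∧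
          q.1 + q.2 ≤ (2 * m * (i : ℝ) + m * (j : ℝ) + n * (j : ℝ)) + (2 * m - n) ∧
          (2 * m * (i : ℝ) + m * (j : ℝ) - n * (j : ℝ)) + m ≤ q.1 - q.2 ∧
          q.1 - q.2 ≤ (2 * m * (i : ℝ) + m * (j : ℝ) - n * (j : ℝ)) + n} := by
      rintro q ⟨x, ⟨p, hp, rfl⟩, rfl⟩
      rw [hB] at hp
      obtain ⟨h1, h2, h3, h4⟩ := hp
      refine ⟨?_, ?_, ?_, ?_⟩ <;>
        simp only [alphaMap, Prod.fst_add, Prod.snd_add, Prod.fst_neg, Prod.snd_neg] <;> linarith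
    obtain ⟨a1, a2, a3, a4⟩ := interior_rect hsub hp1
    obtain ⟨hj1, hj2⟩ := int_between (c := 2 * n) (lo := 0) (hi := 2) (by linarith)
      (by push_cast; linarith) (by push_cast; linarith)
    have hj0 : j = 1 := by omega
    subst hj0
    push_cast at a1 a2 a3 a4
    exfalso
    obtain ⟨hi1, hi2⟩ := int_between (c := 2 * m) (lo := -1) (hi := 0) (by linarith)
      (by push_cast; linarith) (by push_cast; linarith)
    omega
end

section
/- Let m, n be reals with 0 < m < n ≤ 3m and n² ≠ 3m², and let Γ = {(2mi + mj, nj) : i, j ∈ ℤ}. Let A = {(x,y) : m ≤ x + y ≤ n, 2m − n ≤ x − y ≤ m}, B = {(x,y) : m ≤ x + y ≤ n, −m ≤ x − y ≤ 2m − n}, and let τ(x,y) = (2m − x, y), ρ(x,y) = (m − x, n − y), σ(x,y) = (y, x). Suppose K ⊆ A and L ⊆ B are compact sets with K ∪ τ(K) = A and K ∩ τ(K) of Lebesgue measure zero, L ∪ ρ(L) = B and L ∩ ρ(L) of Lebesgue measure zero, and σ(K ∪ L) = K ∪ L. Let S = {(x,y) : |x| + |y| ≤ m} and F = S ∪ ⋃_{γ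 ∈ {id,−id,α,−α}} γ(K ∪ L). Then F is a fundamental domain for Γ, and Sym(F) contains the group of order 8 generated by α and σ (a dihedral group of order 8). -/
open MeasureTheory

/-- The point group `{id, −id, α, −α}` of a rhombic lattice, where `α(x,y) = (−x,y)`. -/
def fourMaps : Set (ℝ × ℝ → ℝ × ℝ) :=
  {fun p => p, fun p => (-p.1, p.2), fun p => (p.1, -p.2), fun p => (-p.1, -p.2)}

/-- The dihedral group of order 8 generated by the reflections `α(x,y) = (−x,y)` and
`σ(x,y) = (y,x)`: the eight symmetries of the square. -/
def octicMaps : Set (ℝ × ℝ → ℝ × ℝ) :=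
  {fun p => p, fun p => (-p.1, p.2), fun p => (p.1, -p.2), fun p => (-p.1, -p.2),
   fun p => (p.2, p.1), fun p => (-p.2, p.1), fun p => (p.2, -p.1), fun p => (-p.2, -p.1)}

/-!
Since `A ∪ B` lies in the closed first quadrant, `F` is the set of points `p` with
`(|p.1|, |p.2|) ∈ S ∪ K ∪ L`. This description makes `F` invariant under sign changes of the
coordinates and, as `σ` preserves `S ∪ K ∪ L`, under swapping them.

The translates `F + Γ` cover the plane: modulo `Γ` every point lands in `[-m, m] × [-n/2, n/2]`, and
since `F + Γ` is invariant under sign changes it suffices to treat `(x, y) ∈ [0, m] × [0, n/2]`.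
Either `(x, y)` or `(m - x, n - y)`, which is `(x, y) - (m, n)` up to signs, lies in the piece
`x + y ≤ n`, `|x - y| ≤ m` of the quadrant. That piece is covered by `S`, `A = K ∪ τ K` and
`B = L ∪ ρ L`, and `τ = α + (2m, 0)`, `ρ = -id + (m, n)` are symmetries of `F` followed by lattice
translations.

Finally `vol F ≤ vol S + 4 vol K + 4 vol L = vol S + 2 vol A + 2 vol B
= 2m² + (n - m)² + (n - m)(3m - n) = 2mn`, the covolume of `Γ`. Translates of a set that cover the
plane with total area at most the covolume overlap only in null sets, and an open null set is empty.
-/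

open Set
open scoped ENNReal Pointwise

theorem measure_inter_eq_zero_of_tsum_le_measure_iUnion {α ι : Type*} [MeasurableSpace α]
    {μ : Measure α} [Countable ι] {A : ι → Set α} (hA : ∀ i, NullMeasurableSet (A i) μ)
    (hle : ∑' i, μ (A i) ≤ μ (⋃ i, A i)) (hfin : μ (⋃ i, A i) ≠ ∞) {i j : ι} (hij : i ≠ j) :
    μ (A i ∩ A j) = 0 := by
  classical
  -- shrinking `A j` to `A j \ A i` keeps the union and lowers the sum by `μ (A i ∩ A j)`
  set B := Function.update A j (A j \ A i)
  have hB : ⋃ k, B k = ⋃ k, A k := by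
    refine Subset.antisymm (iUnion_mono fun k => ?_) (iUnion_subset fun k x hx => ?_)
    · rcases eq_or_ne k j with rfl | hk
      · simp [B]
      · simp [B, hk]
    · by_cases hxB : x ∈ B k
      · exact mem_iUnion_of_mem k hxB
      · refine mem_iUnion_of_mem i ?_
        rcases eq_or_ne k j with rfl | hk <;> simp_all [B]
  have hsum : ∑' k, μ (A k) = ∑' k, μ (B k) + μ (A i ∩ A j) :=
    calc ∑' k, μ (A k) = ∑' k, (μ (B k) + if k = j then μ (A i ∩ A j) else 0) := by
          refine tsum_congr fun k => ?_
          rcases eq_or_ne k j with rfl | hk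
          · simp only [B, Function.update_self, if_true]
            rw [inter_comm, add_comm]
            exact (measure_inter_add_sdiff₀ _ (hA i)).symm
          · simp [B, hk]
      _ = ∑' k, μ (B k) + μ (A i ∩ A j) := by rw [ENNReal.tsum_add, tsum_ite_eq]
  have hBfin : ∑' k, μ (B k) ≠ ∞ := ne_top_of_le_ne_top hfin (hsum ▸ le_self_add |>.trans hle)
  have : ∑' k, μ (B k) + μ (A i ∩ A j) ≤ ∑' k, μ (B k) + 0 := by
    rw [← hsum, add_zero]
    exact hle.trans (hB ▸ measure_iUnion_le B)
  exact le_antisymm ((ENNReal.add_le_add_iff_left hBfin).1 this) zero_le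

theorem MeasureTheory.IsAddFundamentalDomain.measure_inter_vadd_eq_zero {G α : Type*} [AddGroup G]
    [Countable G] [AddAction G α] [MeasurableSpace α] [MeasurableConstVAdd G α] {μ : Measure α}
    [VAddInvariantMeasure G α μ] {D F : Set α} (hD : IsAddFundamentalDomain G D μ)
    (hDfin : μ D ≠ ∞) (hF : NullMeasurableSet F μ) (hcover : ⋃ g : G, g +ᵥ F = univ)
    (hle : μ F ≤ μ D) {g : G} (hg : g ≠ 0) : μ (F ∩ (g +ᵥ F)) = 0 := by
  set A : G → Set α := fun h => (h +ᵥ F) ∩ D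
  have hA : ⋃ h, A h = D := by simp only [A, ← iUnion_inter, hcover, univ_inter]
  have hnull : ∀ h h' : G, h ≠ h' → μ (A h ∩ A h') = 0 := fun h h' =>
    measure_inter_eq_zero_of_tsum_le_measure_iUnion
      (fun h => (hF.vadd h).inter hD.nullMeasurableSet)
      (by rw [hA, ← hD.measure_eq_tsum]; exact hle) (by rwa [hA])
  rw [hD.measure_eq_tsum, ENNReal.tsum_eq_zero]
  intro h
  refine measure_mono_null (fun x ⟨hx, hxD⟩ => ?_) (hnull h (h + g) (by simpa using hg))
  rw [vadd_set_inter, vadd_vadd] at hx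
  exact ⟨⟨hx.1, hxD⟩, hx.2, hxD⟩

theorem MeasureTheory.MeasurePreserving.measure_image_of_involutive {α : Type*}
    [MeasurableSpace α] {μ : Measure α} {f : α → α} (hf : MeasurePreserving f μ μ)
    (hinv : Function.Involutive f) {s : Set α} (hs : NullMeasurableSet s μ) :
    μ (f '' s) = μ s := by
  rw [hinv.image_eq_preimage_symm, hf.measure_preimage hs]

theorem two_mul_measure_eq_of_union_image_eq {α : Type*} [MeasurableSpace α] {μ : Measure α}
    {f : α → α} (hf : MeasurePreserving f μ μ) (hinv : Function.Involutive f) {K A : Set α}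
    (hK : NullMeasurableSet K μ) (hKA : K ∪ f '' K = A) (h0 : μ (K ∩ f '' K) = 0) :
    2 * μ K = μ A := by
  have h := measure_union_add_inter₀ K (t := f '' K)
    (by rw [hinv.image_eq_preimage_symm]; exact hK.preimage hf.quasiMeasurePreserving)
  rwa [hKA, h0, add_zero, hf.measure_image_of_involutive hinv hK, ← two_mul, eq_comm] at h

theorem abs_add_abs_le_iff {x y c : ℝ} : |x| + |y| ≤ c ↔ |x + y| ≤ c ∧ |x - y| ≤ c := by
  refine ⟨fun h => ⟨(abs_add_le x y).trans h, (abs_sub x y).trans h⟩, fun ⟨h1, h2⟩ => ?_⟩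
  rw [abs_le] at h1 h2
  cases abs_cases x <;> cases abs_cases y <;> linarith

theorem mem_of_abs_fst_abs_snd_mem {T : Set (ℝ × ℝ)} (hα : ∀ p ∈ T, (-p.1, p.2) ∈ T)
    (hβ : ∀ p ∈ T, (p.1, -p.2) ∈ T) {p : ℝ × ℝ} (h : (|p.1|, |p.2|) ∈ T) : p ∈ T := by
  obtain ⟨x, y⟩ := p
  rcases abs_choice x with hx | hx <;> rcases abs_choice y with hy | hy <;>
    simp only [hx, hy] at h
  exacts [h, by simpa using hβ _ h, by simpa using hα _ h, by simpa using hα _ (hβ _ h)]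

def addSubLinearMap : ℝ × ℝ →ₗ[ℝ] ℝ × ℝ :=
  (LinearMap.fst ℝ ℝ ℝ + LinearMap.snd ℝ ℝ ℝ).prod (LinearMap.fst ℝ ℝ ℝ - LinearMap.snd ℝ ℝ ℝ)

theorem det_addSubLinearMap : LinearMap.det addSubLinearMap = -2 := by
  have : LinearMap.toMatrix (Module.Basis.finTwoProd ℝ) (Module.Basis.finTwoProd ℝ)
      addSubLinearMap = !![1, 1; 1, -1] := by
    ext i j
    fin_cases i <;> fin_cases j <;> simp [LinearMap.toMatrix_apply, addSubLinearMap]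
  rw [← LinearMap.det_toMatrix (Module.Basis.finTwoProd ℝ), this, Matrix.det_fin_two_of]
  norm_num

theorem volume_setOf_add_sub_le {a b c d : ℝ} (hab : a ≤ b) :
    volume {p : ℝ × ℝ | a ≤ p.1 + p.2 ∧ p.1 + p.2 ≤ b ∧ c ≤ p.1 - p.2 ∧ p.1 - p.2 ≤ d} =
      ENNReal.ofReal ((b - a) * (d - c) / 2) := by
  have : {p : ℝ × ℝ | a ≤ p.1 + p.2 ∧ p.1 + p.2 ≤ b ∧ c ≤ p.1 - p.2 ∧ p.1 - p.2 ≤ d} =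
      addSubLinearMap ⁻¹' Icc a b ×ˢ Icc c d := by
    ext p
    exact and_assoc.symm
  rw [this, Measure.addHaar_preimage_linearMap _ (by simp [det_addSubLinearMap]),
    det_addSubLinearMap, Measure.volume_eq_prod, Measure.prod_prod, Real.volume_Icc,
    Real.volume_Icc, ← ENNReal.ofReal_mul (by linarith), ← ENNReal.ofReal_mul (by positivity)]
  congr 1
  norm_num
  ring

theorem biUnion_fourMaps_image_eq_preimage_prodMap_abs {W : Set (ℝ × ℝ)}
    (hW : ∀ p ∈ W, 0 ≤ p.1 ∧ 0 ≤ p.2) :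
    ⋃ γ ∈ fourMaps, γ '' W = Prod.map abs abs ⁻¹' W := by
  have habs : ∀ p ∈ W, (|p.1|, |p.2|) = p := fun p hp =>
    Prod.ext (abs_of_nonneg (hW p hp).1) (abs_of_nonneg (hW p hp).2)
  ext p
  simp only [fourMaps, mem_insert_iff, mem_singleton_iff, iUnion_iUnion_eq_or_left,
    iUnion_iUnion_eq_left, mem_union, mem_image, mem_preimage]
  constructor
  · rintro (⟨q, hq, rfl⟩ | ⟨q, hq, rfl⟩ | ⟨q, hq, rfl⟩ | ⟨q, hq, rfl⟩) <;>
      simpa [Prod.map, habs q hq] using hq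
  · intro (h : (|p.1|, |p.2|) ∈ W)
    rcases abs_choice p.1 with hx | hx <;> rcases abs_choice p.2 with hy | hy <;>
      rw [hx, hy] at h
    exacts [Or.inl ⟨_, h, rfl⟩, Or.inr (Or.inr (Or.inl ⟨_, h, by simp⟩)),
      Or.inr (Or.inl ⟨_, h, by simp⟩), Or.inr (Or.inr (Or.inr ⟨_, h, by simp⟩))]

theorem image_preimage_prodMap_abs_of_mem_octicMaps {E : Set (ℝ × ℝ)}
    (hE : ∀ p ∈ E, p.swap ∈ E) {f : ℝ × ℝ → ℝ × ℝ} (hf : f ∈ octicMaps) :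
    f '' (Prod.map abs abs ⁻¹' E) = Prod.map abs abs ⁻¹' E := by
  have hswap : ∀ x y : ℝ, (y, x) ∈ E ↔ (x, y) ∈ E :=
    fun x y => ⟨fun h => by simpa using hE _ h, fun h => by simpa using hE _ h⟩
  simp only [octicMaps, mem_insert_iff, mem_singleton_iff] at hf
  rcases hf with rfl | rfl | rfl | rfl | rfl | rfl | rfl | rfl <;> ext ⟨x, y⟩ <;>
    simp [neg_eq_iff_eq_neg, hswap]

theorem measure_biUnion_fourMaps_image_le {W : Set (ℝ × ℝ)} (hW : NullMeasurableSet W volume) :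
    volume (⋃ γ ∈ fourMaps, γ '' W) ≤ 4 * volume W := by
  have hneg := Measure.measurePreserving_neg (volume : Measure ℝ)
  have hid := MeasurePreserving.id (volume : Measure ℝ)
  have hα : volume ((fun p : ℝ × ℝ => (-p.1, p.2)) '' W) = volume W :=
    (hneg.prod hid).measure_image_of_involutive (fun p => by simp [Prod.map]) hW
  have hβ : volume ((fun p : ℝ × ℝ => (p.1, -p.2)) '' W) = volume W :=
    (hid.prod hneg).measure_image_of_involutive (fun p => by simp [Prod.map]) hW
  have hν : volume ((fun p : ℝ × ℝ => (-p.1, -p.2)) '' W) = volume W :=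
    (hneg.prod hneg).measure_image_of_involutive (fun p => by simp [Prod.map]) hW
  simp only [fourMaps, biUnion_insert, biUnion_singleton, image_id']
  calc _ ≤ volume W + (volume _ + (volume _ + volume _)) :=
        (measure_union_le _ _).trans (add_le_add le_rfl ((measure_union_le _ _).trans
          (add_le_add le_rfl (measure_union_le _ _))))
    _ = 4 * volume W := by rw [hα, hβ, hν]; ring

theorem isCompact_setOf_abs_add_abs_le (m : ℝ) : IsCompact {p : ℝ × ℝ | |p.1| + |p.2| ≤ m} := by
  refine Metric.isCompact_of_isClosed_isBounded (isClosed_le (by fun_prop) continuous_const)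
    ((Metric.isBounded_closedBall (x := 0) (r := m)).subset ?_)
  intro p (hp : |p.1| + |p.2| ≤ m)
  rw [mem_closedBall_zero_iff, Prod.norm_def, Real.norm_eq_abs, Real.norm_eq_abs]
  exact max_le (by linarith [abs_nonneg p.2]) (by linarith [abs_nonneg p.1])

theorem isCompact_biUnion_fourMaps_image {W : Set (ℝ × ℝ)} (hW : IsCompact W) :
    IsCompact (⋃ γ ∈ fourMaps, γ '' W) := by
  refine Finite.isCompact_biUnion (by simp [fourMaps]) fun γ hγ => ?_
  simp only [fourMaps, mem_insert_iff, mem_singleton_iff] at hγ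
  rcases hγ with rfl | rfl | rfl | rfl <;> exact hW.image (by fun_prop)

section RhombicLattice

variable {m n : ℝ}

def rhombicLatticeAddSubgroup (m n : ℝ) : AddSubgroup (ℝ × ℝ) where
  carrier := rhombicLattice m n
  zero_mem' := ⟨0, 0, by simp; rfl⟩
  add_mem' := by
    rintro _ _ ⟨i, j, rfl⟩ ⟨i', j', rfl⟩
    exact ⟨i + i', j + j', by
      simp only [Prod.mk_add_mk, Prod.mk.injEq]; push_cast; constructor <;> ring⟩
  neg_mem' := by
    rintro _ ⟨i, j, rfl⟩
    exact ⟨-i, -j, by simp only [Prod.neg_mk, Prod.mk.injEq]; push_cast; constructor <;> ring⟩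

instance : Countable (rhombicLatticeAddSubgroup m n) := by
  have : rhombicLattice m n = range fun ij : ℤ × ℤ =>
      (2 * m * (ij.1 : ℝ) + m * (ij.2 : ℝ), n * (ij.2 : ℝ)) := by
    ext p; simp [rhombicLattice, eq_comm]
  exact (this ▸ countable_range _ : (rhombicLattice m n).Countable).to_subtype

theorem neg_fst_mem_rhombicLattice {v : ℝ × ℝ} (hv : v ∈ rhombicLattice m n) :
    (-v.1, v.2) ∈ rhombicLattice m n := by
  obtain ⟨i, j, rfl⟩ := hv
  exact ⟨-i - j, j, Prod.ext (by push_cast; ring) rfl⟩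

theorem neg_snd_mem_rhombicLattice {v : ℝ × ℝ} (hv : v ∈ rhombicLattice m n) :
    (v.1, -v.2) ∈ rhombicLattice m n := by
  obtain ⟨i, j, rfl⟩ := hv
  exact ⟨i + j, -j, Prod.ext (by push_cast; ring) (by push_cast; ring)⟩

theorem existsUnique_vadd_mem_Ico_prod_Ico (hm : 0 < m) (hn : 0 < n) (a b : ℝ) (p : ℝ × ℝ) :
    ∃! g : rhombicLatticeAddSubgroup m n, g +ᵥ p ∈ Ico a (a + 2 * m) ×ˢ Ico b (b + n) := by
  obtain ⟨j, hj, hju⟩ := existsUnique_add_zsmul_mem_Ico hn p.2 b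
  obtain ⟨i, hi, hiu⟩ := existsUnique_add_zsmul_mem_Ico (by positivity : 0 < 2 * m) (p.1 + j * m) a
  simp only [zsmul_eq_mul] at hi hj hiu hju
  refine ⟨⟨_, i, j, rfl⟩, ?_, ?_⟩
  · simp only [AddSubgroup.vadd_def, vadd_eq_add, mem_prod, Prod.fst_add, Prod.snd_add]
    exact ⟨by convert hi using 1; ring, by convert hj using 1; ring⟩
  rintro ⟨_, i', j', rfl⟩ h
  simp only [AddSubgroup.vadd_def, vadd_eq_add, mem_prod, Prod.fst_add, Prod.snd_add] at h
  obtain ⟨hi', hj'⟩ := h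
  obtain rfl : j' = j := hju j' (by convert hj' using 1; ring)
  obtain rfl : i' = i := hiu i' (by convert hi' using 1; ring)
  rfl

theorem isAddFundamentalDomain_Ico_prod_Ico (hm : 0 < m) (hn : 0 < n) (a b : ℝ) :
    IsAddFundamentalDomain (rhombicLatticeAddSubgroup m n)
      (Ico a (a + 2 * m) ×ˢ Ico b (b + n)) volume :=
  .mk' (measurableSet_Ico.prod measurableSet_Ico).nullMeasurableSet
    (existsUnique_vadd_mem_Ico_prod_Ico hm hn a b)

theorem exists_mem_rhombicLattice_abs_sub_le (hm : 0 < m) (hn : 0 < n) (p : ℝ × ℝ) :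
    ∃ v ∈ rhombicLattice m n, |p.1 - v.1| ≤ m ∧ |p.2 - v.2| ≤ n / 2 := by
  obtain ⟨⟨g, hg⟩, ⟨⟨h1, h2⟩, h3, h4⟩, -⟩ :=
    existsUnique_vadd_mem_Ico_prod_Ico hm hn (-m) (-(n / 2)) p
  simp only [AddSubgroup.mk_vadd, vadd_eq_add, Prod.fst_add, Prod.snd_add] at h1 h2 h3 h4
  refine ⟨-g, (rhombicLatticeAddSubgroup m n).neg_mem hg, abs_le.2 ⟨?_, ?_⟩, abs_le.2 ⟨?_, ?_⟩⟩ <;>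
    simp only [Prod.fst_neg, Prod.snd_neg] <;> linarith

theorem add_rhombicLattice_eq_univ {F : Set (ℝ × ℝ)} (hm : 0 < m) (hmn : m ≤ n)
    (hn3 : n ≤ 3 * m) (hα : ∀ p ∈ F, (-p.1, p.2) ∈ F) (hβ : ∀ p ∈ F, (p.1, -p.2) ∈ F)
    (hquad : ∀ x y : ℝ, 0 ≤ x → 0 ≤ y → x + y ≤ n → |x - y| ≤ m →
      (x, y) ∈ F + rhombicLattice m n) :
    F + rhombicLattice m n = univ := by
  have hmap : ∀ φ : ℝ × ℝ → ℝ × ℝ, (∀ p q, φ (p + q) = φ p + φ q) → (∀ p ∈ F, φ p ∈ F) →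
      (∀ v ∈ rhombicLattice m n, φ v ∈ rhombicLattice m n) →
      ∀ p ∈ F + rhombicLattice m n, φ p ∈ F + rhombicLattice m n := by
    rintro φ hφ hF hΓ _ ⟨p, hp, v, hv, rfl⟩
    exact ⟨_, hF p hp, _, hΓ v hv, (hφ p v).symm⟩
  have hαT := hmap _ (fun p q => Prod.ext (neg_add _ _) rfl) hα
    fun v => neg_fst_mem_rhombicLattice
  have hβT := hmap _ (fun p q => Prod.ext rfl (neg_add _ _)) hβ
    fun v => neg_snd_mem_rhombicLattice
  have hadd : ∀ p ∈ F + rhombicLattice m n, ∀ v ∈ rhombicLattice m n,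
      p + v ∈ F + rhombicLattice m n := by
    rintro _ ⟨p, hp, w, hw, rfl⟩ v hv
    exact ⟨p, hp, w + v, (rhombicLatticeAddSubgroup m n).add_mem hw hv, (add_assoc _ _ _).symm⟩
  have hbox : ∀ x y : ℝ, 0 ≤ x → x ≤ m → 0 ≤ y → y ≤ n / 2 → (x, y) ∈ F + rhombicLattice m n := by
    intro x y hx hxm hy hyn
    by_cases h : x + y ≤ n ∧ |x - y| ≤ m
    · exact hquad x y hx hy h.1 h.2
    have hxy : m ≤ x + y ∧ n - 2 * m ≤ y - x := by
      rw [not_and_or, not_le, not_le, lt_abs] at h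
      rcases h with h | h | h <;> constructor <;> linarith
    have h' := hquad (m - x) (n - y) (by linarith) (by linarith) (by linarith)
      (abs_le.2 ⟨by linarith, by linarith⟩)
    have := mem_of_abs_fst_abs_snd_mem hαT hβT (p := (x - m, y - n))
      (by rwa [abs_of_nonpos (by linarith), abs_of_nonpos (by linarith), neg_sub, neg_sub])
    simpa using hadd _ this (m, n) ⟨0, 1, by simp⟩
  refine eq_univ_of_forall fun p => ?_
  obtain ⟨v, hv, h1, h2⟩ := exists_mem_rhombicLattice_abs_sub_le hm (hm.trans_le hmn) p
  have : p - v ∈ F + rhombicLattice m n :=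
    mem_of_abs_fst_abs_snd_mem hαT hβT (hbox _ _ (abs_nonneg _) h1 (abs_nonneg _) h2)
  simpa using hadd _ this v hv

theorem mem_add_rhombicLattice_of_mem_quadrant {F K L : Set (ℝ × ℝ)}
    (hα : ∀ p ∈ F, (-p.1, p.2) ∈ F) (hneg : ∀ p ∈ F, (-p.1, -p.2) ∈ F)
    (hS : {p : ℝ × ℝ | |p.1| + |p.2| ≤ m} ⊆ F) (hKL : K ∪ L ⊆ F)
    (hK1 : K ∪ (fun p => (2 * m - p.1, p.2)) '' K = {p : ℝ × ℝ | m ≤ p.1 + p.2 ∧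
      p.1 + p.2 ≤ n ∧ 2 * m - n ≤ p.1 - p.2 ∧ p.1 - p.2 ≤ m})
    (hL1 : L ∪ (fun p => (m - p.1, n - p.2)) '' L = {p : ℝ × ℝ | m ≤ p.1 + p.2 ∧
      p.1 + p.2 ≤ n ∧ -m ≤ p.1 - p.2 ∧ p.1 - p.2 ≤ 2 * m - n})
    {x y : ℝ} (hx : 0 ≤ x) (hy : 0 ≤ y) (hn : x + y ≤ n) (hm : |x - y| ≤ m) :
    (x, y) ∈ F + rhombicLattice m n := by
  have hF : F ⊆ F + rhombicLattice m n := subset_add_left F ⟨0, 0, by simp; rfl⟩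
  rcases le_total (x + y) m with h | h
  · exact hF (hS (by simpa [abs_of_nonneg hx, abs_of_nonneg hy] using h))
  rw [abs_le] at hm
  rcases le_total (2 * m - n) (x - y) with h' | h'
  · have : (x, y) ∈ K ∪ (fun p => (2 * m - p.1, p.2)) '' K := by
      rw [hK1]; exact ⟨h, hn, h', hm.2⟩
    rcases this with hk | ⟨k, hk, hkxy⟩
    · exact hF (hKL (Or.inl hk))
    · refine ⟨_, hα _ (hKL (Or.inl hk)), (2 * m, 0), ⟨1, 0, by simp⟩, ?_⟩
      rw [← hkxy]
      ext <;> simp [neg_add_eq_sub]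
  · have : (x, y) ∈ L ∪ (fun p => (m - p.1, n - p.2)) '' L := by
      rw [hL1]; exact ⟨h, hn, hm.1, h'⟩
    rcases this with hl | ⟨l, hl, hlxy⟩
    · exact hF (hKL (Or.inr hl))
    · refine ⟨_, hneg _ (hKL (Or.inr hl)), (m, n), ⟨0, 1, by simp⟩, ?_⟩
      rw [← hlxy]
      ext <;> simp [neg_add_eq_sub]

theorem volume_union_biUnion_fourMaps_le (hm : 0 < m) (hmn : m ≤ n) (hn3 : n ≤ 3 * m)
    {K L : Set (ℝ × ℝ)} (hK : MeasurableSet K) (hL : MeasurableSet L)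
    (hK1 : K ∪ (fun p => (2 * m - p.1, p.2)) '' K = {p : ℝ × ℝ | m ≤ p.1 + p.2 ∧
      p.1 + p.2 ≤ n ∧ 2 * m - n ≤ p.1 - p.2 ∧ p.1 - p.2 ≤ m})
    (hK0 : volume (K ∩ (fun p => (2 * m - p.1, p.2)) '' K) = 0)
    (hL1 : L ∪ (fun p => (m - p.1, n - p.2)) '' L = {p : ℝ × ℝ | m ≤ p.1 + p.2 ∧
      p.1 + p.2 ≤ n ∧ -m ≤ p.1 - p.2 ∧ p.1 - p.2 ≤ 2 * m - n})
    (hL0 : volume (L ∩ (fun p => (m - p.1, n - p.2)) '' L) = 0) :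
    volume ({p : ℝ × ℝ | |p.1| + |p.2| ≤ m} ∪ ⋃ γ ∈ fourMaps, γ '' (K ∪ L)) ≤
      ENNReal.ofReal (2 * m * n) := by
  have hτ : MeasurePreserving (fun p : ℝ × ℝ => (2 * m - p.1, p.2)) :=
    (Measure.measurePreserving_sub_left volume _).prod (MeasurePreserving.id volume)
  have hρ : MeasurePreserving (fun p : ℝ × ℝ => (m - p.1, n - p.2)) :=
    (Measure.measurePreserving_sub_left volume _).prod (Measure.measurePreserving_sub_left volume _)
  have hK2 := two_mul_measure_eq_of_union_image_eq hτ (fun p => by simp) hK.nullMeasurableSet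
    hK1 hK0
  have hL2 := two_mul_measure_eq_of_union_image_eq hρ (fun p => by simp) hL.nullMeasurableSet
    hL1 hL0
  rw [volume_setOf_add_sub_le hmn] at hK2 hL2
  have hS : volume {p : ℝ × ℝ | |p.1| + |p.2| ≤ m} = ENNReal.ofReal ((m - -m) * (m - -m) / 2) := by
    rw [← volume_setOf_add_sub_le (by linarith)]
    simp only [abs_add_abs_le_iff, abs_le, and_assoc]
  calc _ ≤ volume {p : ℝ × ℝ | |p.1| + |p.2| ≤ m} + 4 * (volume K + volume L) :=
        (measure_union_le _ _).trans (add_le_add le_rfl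
          ((measure_biUnion_fourMaps_image_le (hK.union hL).nullMeasurableSet).trans
            (by gcongr; exact measure_union_le _ _)))
    _ = volume {p : ℝ × ℝ | |p.1| + |p.2| ≤ m} + 2 * (2 * volume K) + 2 * (2 * volume L) := by
        ring
    _ = ENNReal.ofReal (2 * m * n) := by
        rw [hS, hK2, hL2, ← ENNReal.ofReal_ofNat 2, ← ENNReal.ofReal_mul zero_le_two,
          ← ENNReal.ofReal_mul zero_le_two, ← ENNReal.ofReal_add (by nlinarith)
            (by nlinarith), ← ENNReal.ofReal_add (by nlinarith) (by nlinarith)]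
        ring_nf

theorem volume_inter_image_add_eq_zero (hm : 0 < m) (hn : 0 < n) {F : Set (ℝ × ℝ)}
    (hF : NullMeasurableSet F volume) (hcover : F + rhombicLattice m n = univ)
    (hle : volume F ≤ ENNReal.ofReal (2 * m * n)) {v : ℝ × ℝ} (hv : v ∈ rhombicLattice m n)
    (hv0 : v ≠ 0) : volume (F ∩ (fun p => p + v) '' F) = 0 := by
  have hD := isAddFundamentalDomain_Ico_prod_Ico hm hn 0 0
  have hDvol : volume (Ico 0 (0 + 2 * m) ×ˢ Ico 0 (0 + n)) = ENNReal.ofReal (2 * m * n) := by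
    rw [Measure.volume_eq_prod, Measure.prod_prod, Real.volume_Ico, Real.volume_Ico,
      ← ENNReal.ofReal_mul (by linarith)]
    ring_nf
  have hcover' : ⋃ g : rhombicLatticeAddSubgroup m n, g +ᵥ F = univ := by
    refine eq_univ_of_forall fun p => ?_
    obtain ⟨f, hf, w, hw, rfl⟩ : p ∈ F + rhombicLattice m n := hcover ▸ mem_univ p
    exact mem_iUnion.2 ⟨⟨w, hw⟩, f, hf, add_comm w f⟩
  have hvadd : (fun p => p + v) '' F = (⟨v, hv⟩ : rhombicLatticeAddSubgroup m n) +ᵥ F := by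
    ext p
    simp only [mem_image, mem_vadd_set, AddSubgroup.vadd_def, vadd_eq_add, add_comm]
  rw [hvadd]
  exact hD.measure_inter_vadd_eq_zero (hDvol ▸ ENNReal.ofReal_ne_top) hF hcover' (hDvol ▸ hle)
    (mt (congrArg Subtype.val) hv0)

theorem union_biUnion_fourMaps_eq_preimage_prodMap_abs (hn3 : n ≤ 3 * m) {K L : Set (ℝ × ℝ)}
    (hKA : K ⊆ {p : ℝ × ℝ | m ≤ p.1 + p.2 ∧ p.1 + p.2 ≤ n ∧
      2 * m - n ≤ p.1 - p.2 ∧ p.1 - p.2 ≤ m})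
    (hLB : L ⊆ {p : ℝ × ℝ | m ≤ p.1 + p.2 ∧ p.1 + p.2 ≤ n ∧
      -m ≤ p.1 - p.2 ∧ p.1 - p.2 ≤ 2 * m - n}) :
    {p : ℝ × ℝ | |p.1| + |p.2| ≤ m} ∪ ⋃ γ ∈ fourMaps, γ '' (K ∪ L) =
      Prod.map abs abs ⁻¹' ({p : ℝ × ℝ | |p.1| + |p.2| ≤ m} ∪ (K ∪ L)) := by
  have hKL : ∀ p ∈ K ∪ L, 0 ≤ p.1 ∧ 0 ≤ p.2 := by
    rintro p (hp | hp)
    · obtain ⟨h1, -, h3, h4⟩ := hKA hp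
      constructor <;> linarith
    · obtain ⟨h1, h2, h3, h4⟩ := hLB hp
      constructor <;> linarith
  rw [biUnion_fourMaps_image_eq_preimage_prodMap_abs hKL]
  ext p
  simp

end RhombicLattice

theorem stmt_5_general (m n : ℝ) (hm : 0 < m) (hmn : m < n) (hn3 : n ≤ 3 * m)
    (A B S K L F : Set (ℝ × ℝ)) (τ ρ σ : ℝ × ℝ → ℝ × ℝ)
    (hA : A = {p : ℝ × ℝ | m ≤ p.1 + p.2 ∧ p.1 + p.2 ≤ n ∧
                2 * m - n ≤ p.1 - p.2 ∧ p.1 - p.2 ≤ m})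
    (hB : B = {p : ℝ × ℝ | m ≤ p.1 + p.2 ∧ p.1 + p.2 ≤ n ∧
                -m ≤ p.1 - p.2 ∧ p.1 - p.2 ≤ 2 * m - n})
    (hτ : τ = fun p => (2 * m - p.1, p.2))
    (hρ : ρ = fun p => (m - p.1, n - p.2))
    (hσ : σ = fun p => (p.2, p.1))
    (hKc : IsCompact K) (hLc : IsCompact L) (hKA : K ⊆ A) (hLB : L ⊆ B)
    (hK1 : K ∪ τ '' K = A) (hK0 : volume (K ∩ τ '' K) = 0)
    (hL1 : L ∪ ρ '' L = B) (hL0 : volume (L ∩ ρ '' L) = 0)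
    (hσKL : σ '' (K ∪ L) = K ∪ L)
    (hS : S = {p : ℝ × ℝ | |p.1| + |p.2| ≤ m})
    (hF : F = S ∪ ⋃ γ ∈ fourMaps, γ '' (K ∪ L)) :
    IsCompact F ∧
    (⋃ v ∈ rhombicLattice m n, (fun p => p + v) '' F) = Set.univ ∧
    (∀ v ∈ rhombicLattice m n, v ≠ 0 →
      interior F ∩ interior ((fun p => p + v) '' F) = ∅) ∧
    ∀ f ∈ octicMaps, f '' F = F := by
  subst hA hB hτ hρ hσ hS
  have hFabs := hF.trans (union_biUnion_fourMaps_eq_preimage_prodMap_abs hn3 hKA hLB)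
  have hsymm : ∀ f ∈ octicMaps, f '' F = F := fun f hf => by
    rw [hFabs]
    refine image_preimage_prodMap_abs_of_mem_octicMaps (fun p hp => ?_) hf
    rcases hp with hp | hp
    · exact Or.inl (by simpa [add_comm] using hp)
    · exact Or.inr (hσKL ▸ mem_image_of_mem _ hp)
  have hα : ∀ p ∈ F, (-p.1, p.2) ∈ F := fun p hp =>
    hsymm (fun p => (-p.1, p.2)) (Or.inr (Or.inl rfl)) ▸ mem_image_of_mem _ hp
  have hβ : ∀ p ∈ F, (p.1, -p.2) ∈ F := fun p hp =>
    hsymm (fun p => (p.1, -p.2)) (Or.inr (Or.inr (Or.inl rfl))) ▸ mem_image_of_mem _ hp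
  have hKLF : K ∪ L ⊆ F := fun p hp =>
    hF ▸ Or.inr (mem_biUnion (x := fun p => p) (Or.inl rfl) ⟨p, hp, rfl⟩)
  have hcover : F + rhombicLattice m n = univ :=
    add_rhombicLattice_eq_univ hm hmn.le hn3 hα hβ fun _ _ hx hy h1 h2 =>
      mem_add_rhombicLattice_of_mem_quadrant hα (fun p hp => hα _ (hβ p hp))
        (hF ▸ subset_union_left) hKLF hK1 hL1 hx hy h1 h2
  have hFc : IsCompact F := hF ▸
    (isCompact_setOf_abs_add_abs_le m).union (isCompact_biUnion_fourMaps_image (hKc.union hLc))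
  have hvol := hF ▸ volume_union_biUnion_fourMaps_le hm hmn.le hn3 hKc.measurableSet
    hLc.measurableSet hK1 hK0 hL1 hL0
  refine ⟨hFc, iUnion_add_right_image.trans hcover, fun v hv hv0 => ?_, hsymm⟩
  refine ((isOpen_interior.inter isOpen_interior).measure_eq_zero_iff volume).1 ?_
  exact measure_mono_null (inter_subset_inter interior_subset interior_subset)
    (volume_inter_image_add_eq_zero hm (hm.trans hmn) hFc.measurableSet.nullMeasurableSet
      hcover hvol hv hv0)

/-- For `0 < m < n ≤ 3m` with `n² ≠ 3m²`, given compact `K ⊆ A` and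
`L ⊆ B` with `K ∪ τ(K) = A` (`K ∩ τ(K)` null), `L ∪ ρ(L) = B` (`L ∩ ρ(L)` null) and
`σ(K ∪ L) = K ∪ L`, the set `F = S ∪ ⋃_{γ ∈ P(Γ)} γ(K ∪ L)` is a fundamental domain
for `Γ` whose symmetry group contains the dihedral group of order 8 generated by
`α` and `σ`. -/
theorem stmt_5 (m n : ℝ) (hm : 0 < m) (hmn : m < n) (hn3 : n ≤ 3 * m)
    (hsq : n ^ 2 ≠ 3 * m ^ 2)
    (A B S K L F : Set (ℝ × ℝ)) (τ ρ σ : ℝ × ℝ → ℝ × ℝ)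
    (hA : A = {p : ℝ × ℝ | m ≤ p.1 + p.2 ∧ p.1 + p.2 ≤ n ∧
                2 * m - n ≤ p.1 - p.2 ∧ p.1 - p.2 ≤ m})
    (hB : B = {p : ℝ × ℝ | m ≤ p.1 + p.2 ∧ p.1 + p.2 ≤ n ∧
                -m ≤ p.1 - p.2 ∧ p.1 - p.2 ≤ 2 * m - n})
    (hτ : τ = fun p => (2 * m - p.1, p.2))
    (hρ : ρ = fun p => (m - p.1, n - p.2))
    (hσ : σ = fun p => (p.2, p.1))
    (hKc : IsCompact K) (hLc : IsCompact L) (hKA : K ⊆ A) (hLB : L ⊆ B)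
    (hK1 : K ∪ τ '' K = A) (hK0 : volume (K ∩ τ '' K) = 0)
    (hL1 : L ∪ ρ '' L = B) (hL0 : volume (L ∩ ρ '' L) = 0)
    (hσKL : σ '' (K ∪ L) = K ∪ L)
    (hS : S = {p : ℝ × ℝ | |p.1| + |p.2| ≤ m})
    (hF : F = S ∪ ⋃ γ ∈ fourMaps, γ '' (K ∪ L)) :
    IsCompact F ∧
    (⋃ v ∈ rhombicLattice m n, (fun p => p + v) '' F) = Set.univ ∧
    (∀ v ∈ rhombicLattice m n, v ≠ 0 →
      interior F ∩ interior ((fun p => p + v) '' F) = ∅) ∧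
    ∀ f ∈ octicMaps, f '' F = F :=
  stmt_5_general m n hm hmn hn3 A B S K L F τ ρ σ hA hB hτ hρ hσ hKc hLc hKA hLB hK1 hK0 hL1 hL0
    hσKL hS hF
end

section
/- Let m, n be reals with 0 < m and 3m < n, let Γ = {(2mi + mj, nj) : i, j ∈ ℤ}, and let t be a positive integer with n − 2mt > m and n − 2m(t+1) ≤ m. Let C = ⋃_{γ ∈ {id,−id,α,−α}} γ(⋃_{i=1}^{t} [m(i−1), mi] × [m(i−1), mi]), where α(x,y) = (−x,y). Then for every nonzero v ∈ Γ, the interior of C and the interior of C + v are disjoint. -/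
/-- The staircase of squares `[m(i−1), mi] × [m(i−1), mi]`, `i = 1, …, t`,
together with its images under the point group `{id, −id, α, −α}`. -/
def staircase (m : ℝ) (t : ℕ) : Set (ℝ × ℝ) :=
  ⋃ γ ∈ ({fun p => p, fun p => -p, alphaMap, fun p => -(alphaMap p)} :
      Set (ℝ × ℝ → ℝ × ℝ)),
    γ '' (⋃ i ∈ Finset.Icc 1 t,
      Set.Icc (m * ((i : ℝ) - 1)) (m * (i : ℝ)) ×ˢ
        Set.Icc (m * ((i : ℝ) - 1)) (m * (i : ℝ)))


/-!
A lattice vector with `j ≠ 0` shifts heights by at least `n`, while `C` lies in the strip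
`|y| ≤ mt` and `2mt < n`, so `C` and `C + v` are even disjoint. For `v = (2mi, 0)` one looks at a
point whose coordinates are not multiples of `m` (such points are dense): if it lies in `C`,
both of its coordinates have the same level `⌈|x / m|⌉`. A shift by the even
nonzero multiple `2mi` always changes the level of the first coordinate and fixes the second,
so no such point lies in both interiors.
-/

open Set

section FloorRing

variable {R : Type*} [Ring R] [LinearOrder R] {a : R}

lemma abs_notMem_range_intCast (ha : a ∉ range ((↑) : ℤ → R)) : |a| ∉ range ((↑) : ℤ → R) := by
  rintro ⟨z, hz⟩
  rcases abs_choice a with h | h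
  · exact ha ⟨z, hz.trans h⟩
  · exact ha ⟨-z, by push_cast; rw [hz, h, neg_neg]⟩

variable [FloorRing R]

lemma ceil_abs_eq_of_abs_mem_Icc (ha : a ∉ range ((↑) : ℤ → R)) {k : ℤ}
    (h : |a| ∈ Icc ((k : R) - 1) k) : ⌈|a|⌉ = k :=
  Int.ceil_eq_iff.2
    ⟨h.1.lt_of_ne fun e => abs_notMem_range_intCast ha ⟨k - 1, by push_cast; exact e⟩, h.2⟩

variable [IsStrictOrderedRing R]

lemma ceil_abs_eq_max_floor (ha : a ∉ range ((↑) : ℤ → R)) :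
    ⌈|a|⌉ = max (⌊a⌋ + 1) (-⌊a⌋) := by
  rcases le_or_gt 0 a with h | h
  · have : 0 ≤ ⌊a⌋ := Int.floor_nonneg.2 h
    rw [abs_of_nonneg h, (Int.ceil_eq_floor_add_one_iff_notMem a).2 ha]
    omega
  · have : ⌊a⌋ < 0 := Int.floor_lt.2 (by exact_mod_cast h)
    rw [abs_of_neg h, Int.ceil_neg]
    omega

/-- Equal levels force the floors to coincide or to sum to `-1`, so they differ by an odd
integer. -/
lemma ceil_abs_ne_ceil_abs_sub_two_mul (ha : a ∉ range ((↑) : ℤ → R)) {i : ℤ} (hi : i ≠ 0) :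
    ⌈|a|⌉ ≠ ⌈|a - 2 * i|⌉ := by
  have hshift : a - 2 * i = a - ((2 * i : ℤ) : R) := by push_cast; rfl
  have ha' : a - 2 * i ∉ range ((↑) : ℤ → R) := by
    rintro ⟨z, hz⟩
    exact ha ⟨z + 2 * i, by push_cast; rw [hz, sub_add_cancel]⟩
  rw [ceil_abs_eq_max_floor ha, ceil_abs_eq_max_floor ha', hshift, Int.floor_sub_intCast]
  omega

end FloorRing

section Staircase

variable {m : ℝ} {t : ℕ} {q : ℝ × ℝ}

lemma exists_abs_div_mem_Icc_of_mem_staircase (hm : 0 < m) (hq : q ∈ staircase m t) :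
    ∃ k ∈ Finset.Icc 1 t, |q.1 / m| ∈ Icc ((k : ℝ) - 1) k ∧ |q.2 / m| ∈ Icc ((k : ℝ) - 1) k := by
  simp only [staircase, mem_iUnion, mem_image, exists_prop] at hq
  obtain ⟨γ, hγ, r, hr, rfl⟩ := hq
  have habs : |(γ r).1| = |r.1| ∧ |(γ r).2| = |r.2| := by
    rcases hγ with rfl | rfl | rfl | rfl <;> simp [alphaMap]
  obtain ⟨k, hk, ⟨h1, h2⟩, h3, h4⟩ := by simpa only [mem_iUnion, mem_prod, exists_prop] using hr
  have hk1 : (1 : ℝ) ≤ k := by exact_mod_cast (Finset.mem_Icc.1 hk).1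
  have hcoord : ∀ x : ℝ, m * (k - 1) ≤ x → x ≤ m * k → |x / m| ∈ Icc ((k : ℝ) - 1) k :=
    fun x hx1 hx2 => by
      rw [abs_of_nonneg (div_nonneg (by nlinarith) hm.le)]
      exact ⟨(le_div_iff₀ hm).2 (by linarith), (div_le_iff₀ hm).2 (by linarith)⟩
  refine ⟨k, hk, ?_, ?_⟩
  · rw [abs_div, habs.1, ← abs_div]; exact hcoord _ h1 h2
  · rw [abs_div, habs.2, ← abs_div]; exact hcoord _ h3 h4

lemma ceil_abs_div_fst_eq_snd_of_mem_staircase (hm : 0 < m) (hq : q ∈ staircase m t)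
    (h1 : q.1 / m ∉ range ((↑) : ℤ → ℝ)) (h2 : q.2 / m ∉ range ((↑) : ℤ → ℝ)) :
    ⌈|q.1 / m|⌉ = ⌈|q.2 / m|⌉ := by
  obtain ⟨k, -, hk1, hk2⟩ := exists_abs_div_mem_Icc_of_mem_staircase hm hq
  rw [ceil_abs_eq_of_abs_mem_Icc (k := k) h1 (by exact_mod_cast hk1),
    ceil_abs_eq_of_abs_mem_Icc (k := k) h2 (by exact_mod_cast hk2)]

lemma abs_snd_le_of_mem_staircase (hm : 0 < m) (hq : q ∈ staircase m t) : |q.2| ≤ m * t := by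
  obtain ⟨k, hk, -, -, hk2⟩ := exists_abs_div_mem_Icc_of_mem_staircase hm hq
  have hkt : (k : ℝ) ≤ t := by exact_mod_cast (Finset.mem_Icc.1 hk).2
  rw [abs_div, abs_of_pos hm, div_le_iff₀ hm] at hk2
  nlinarith

lemma disjoint_staircase_image_add (hm : 0 < m) {v : ℝ × ℝ} (hv : 2 * m * t < |v.2|) :
    Disjoint (staircase m t) ((· + v) '' staircase m t) := by
  rw [disjoint_left]
  rintro _ hp ⟨r, hr, rfl⟩
  have h1 := abs_snd_le_of_mem_staircase hm hp
  have h2 := abs_snd_le_of_mem_staircase hm hr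
  have hv' : |v.2| ≤ |(r + v).2| + |r.2| := by
    simpa only [Prod.snd_add, add_sub_cancel_left] using abs_sub (r + v).2 r.2
  linarith

lemma dense_div_notMem_range_intCast (hm : m ≠ 0) :
    Dense {x : ℝ | x / m ∉ range ((↑) : ℤ → ℝ)} :=
  Countable.dense_compl ℝ <| (countable_range _).preimage fun x y h => by
    simpa [div_left_inj' hm] using h

lemma interior_staircase_inter_interior_image_add_eq_empty (hm : 0 < m) {i : ℤ} (hi : i ≠ 0) :
    interior (staircase m t) ∩ interior ((· + (2 * m * i, 0)) '' staircase m t) = ∅ := by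
  set D := {x : ℝ | x / m ∉ range ((↑) : ℤ → ℝ)}
  have hD : Dense (D ×ˢ D) :=
    (dense_div_notMem_range_intCast hm.ne').prod (dense_div_notMem_range_intCast hm.ne')
  by_contra hne
  obtain ⟨p, ⟨hpC, hpC'⟩, hp1, hp2⟩ := hD.inter_open_nonempty _
    (isOpen_interior.inter isOpen_interior) (nonempty_iff_ne_empty.2 hne)
  obtain ⟨r, hr, hrp⟩ := interior_subset hpC'
  have hr1 : r.1 / m = p.1 / m - 2 * i := by
    rw [← hrp]; field_simp; simp only [Prod.fst_add]; ring
  have hr2 : r.2 = p.2 := by simp [← hrp]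
  have hr1D : r.1 ∈ D := fun ⟨z, hz⟩ => hp1 ⟨z + 2 * i, by push_cast; linarith⟩
  apply ceil_abs_ne_ceil_abs_sub_two_mul hp1 hi
  rw [ceil_abs_div_fst_eq_snd_of_mem_staircase hm (interior_subset hpC) hp1 hp2, ← hr2, ← hr1,
    ceil_abs_div_fst_eq_snd_of_mem_staircase hm hr hr1D (hr2 ▸ hp2)]

end Staircase

theorem stmt_17_general (m n : ℝ) (hm : 0 < m) (t : ℕ)
    (ht1 : m < n - 2 * m * (t : ℝ)) :
    ∀ v ∈ rhombicLattice m n, v ≠ 0 →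
      interior (staircase m t) ∩ interior ((fun p => p + v) '' staircase m t) = ∅ := by
  rintro _ ⟨i, j, rfl⟩ hv
  rcases eq_or_ne j 0 with rfl | hj
  · have hi : i ≠ 0 := by rintro rfl; simp at hv
    simpa using interior_staircase_inter_interior_image_add_eq_empty (t := t) hm hi
  · have hj1 : (1 : ℝ) ≤ |(j : ℝ)| := by exact_mod_cast Int.one_le_abs hj
    have hn0 : 0 < n := by linarith [show 0 ≤ 2 * m * t by positivity]
    have hn : 2 * m * t < |n * j| := by
      rw [abs_mul, abs_of_pos hn0]
      linarith [le_mul_of_one_le_right hn0.le hj1]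
    exact ((disjoint_staircase_image_add hm hn).mono interior_subset interior_subset).inter_eq

/-- For `0 < m`, `3m < n`, and `t` the largest positive integer with
`n − 2mt > m`, the set `C = staircase m t` has interior disjoint from the interior of each
of its translates by nonzero lattice vectors. -/
theorem stmt_17 (m n : ℝ) (hm : 0 < m) (hn : 3 * m < n) (t : ℕ) (ht : 0 < t)
    (ht1 : m < n - 2 * m * (t : ℝ)) (ht2 : n - 2 * m * ((t : ℝ) + 1) ≤ m) :
    ∀ v ∈ rhombicLattice m n, v ≠ 0 →
      interior (staircase m t) ∩ interior ((fun p => p + v) '' staircase m t) = ∅ :=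
  stmt_17_general m n hm t ht1
end

section
/- Let m, n be reals with 0 < m and 3m < n, let Γ = {(2mi + mj, nj) : i, j ∈ ℤ}, and let t be a positive integer with n − 2mt > m and n − 2m(t+1) ≤ m. Let C = ⋃_{γ ∈ {id,−id,α,−α}} γ(⋃_{i=1}^{t} [m(i−1), mi] × [m(i−1), mi]), where α(x,y) = (−x,y). Then ⋃_{v∈Γ} (C + v) = {(x,y) ∈ ℝ² : there exists k ∈ ℤ with |y − kn| ≤ mt}; that is, the part of the plane left uncovered by C + Γ is the union over k ∈ ℤ of the open horizontal strips ℝ × (kn + mt, (k+1)n − mt), each of width n − 2mt. -/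
lemma mem_staircase_iff {m : ℝ} (hm : 0 < m) {t : ℕ} {p : ℝ × ℝ} :
    p ∈ staircase m t ↔ ∃ i ∈ Finset.Icc 1 t,
      (m * ((i : ℝ) - 1) ≤ |p.1| ∧ |p.1| ≤ m * (i : ℝ)) ∧
      (m * ((i : ℝ) - 1) ≤ |p.2| ∧ |p.2| ≤ m * (i : ℝ)) := by
  constructor
  · intro hp
    simp only [staircase, Set.mem_iUnion, Set.mem_image] at hp
    obtain ⟨γ, hγ, q, hq, hqp⟩ := hp
    obtain ⟨i, hi, hq'⟩ := hq
    rw [Set.mem_prod] at hq'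
    obtain ⟨⟨h1l, h1u⟩, ⟨h2l, h2u⟩⟩ := hq'
    have hi1 : 1 ≤ i := (Finset.mem_Icc.mp hi).1
    have hnn : (0:ℝ) ≤ m * ((i : ℝ) - 1) := by
      have : (1:ℝ) ≤ (i:ℝ) := by exact_mod_cast hi1
      nlinarith
    have hq1 : (0:ℝ) ≤ q.1 := le_trans hnn h1l
    have hq2 : (0:ℝ) ≤ q.2 := le_trans hnn h2l
    refine ⟨i, hi, ?_⟩
    simp only [Set.mem_insert_iff, Set.mem_singleton_iff] at hγ
    rcases hγ with rfl | rfl | rfl | rfl <;>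
      simp only [← hqp, alphaMap, Prod.fst_neg, Prod.snd_neg, abs_neg] <;>
      rw [abs_of_nonneg hq1, abs_of_nonneg hq2] <;>
      exact ⟨⟨h1l, h1u⟩, h2l, h2u⟩
  · rintro ⟨i, hi, ⟨h1l, h1u⟩, h2l, h2u⟩
    simp only [staircase, Set.mem_iUnion, Set.mem_image]
    have hq : (|p.1|, |p.2|) ∈ ⋃ i ∈ Finset.Icc 1 t,
        Set.Icc (m * ((i : ℝ) - 1)) (m * (i : ℝ)) ×ˢ
          Set.Icc (m * ((i : ℝ) - 1)) (m * (i : ℝ)) :=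
      Set.mem_iUnion₂.mpr ⟨i, hi, Set.mem_prod.mpr ⟨⟨h1l, h1u⟩, ⟨h2l, h2u⟩⟩⟩
    rw [Set.mem_iUnion₂] at hq
    rcases le_or_gt 0 p.1 with hx | hx <;> rcases le_or_gt 0 p.2 with hy | hy
    · exact ⟨fun p => p, Or.inl rfl, (|p.1|, |p.2|), hq, by
        simp [abs_of_nonneg hx, abs_of_nonneg hy]⟩
    · exact ⟨fun p => -(alphaMap p), by simp, (|p.1|, |p.2|), hq, by
        simp [alphaMap, Prod.ext_iff, abs_of_nonneg hx, abs_of_neg hy]⟩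
    · exact ⟨alphaMap, by simp, (|p.1|, |p.2|), hq, by
        simp [alphaMap, Prod.ext_iff, abs_of_neg hx, abs_of_nonneg hy]⟩
    · exact ⟨fun p => -p, by simp, (|p.1|, |p.2|), hq, by
        simp [Prod.ext_iff, abs_of_neg hx, abs_of_neg hy]⟩
/-- For `0 < m`, `3m < n`, and `t` the largest positive integer with
`n − 2mt > m`, the union of the lattice translates of `C = staircase m t` is exactly
`{(x,y) : ∃ k ∈ ℤ, |y − kn| ≤ mt}`; equivalently, the uncovered part of the plane is
the union of the open horizontal strips `ℝ × (kn + mt, (k+1)n − mt)`, `k ∈ ℤ`. -/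
theorem stmt_18 (m n : ℝ) (hm : 0 < m) (hn : 3 * m < n) (t : ℕ) (ht : 0 < t)
    (ht1 : m < n - 2 * m * (t : ℝ)) (ht2 : n - 2 * m * ((t : ℝ) + 1) ≤ m) :
    (⋃ v ∈ rhombicLattice m n, (fun p => p + v) '' staircase m t) =
      {p : ℝ × ℝ | ∃ k : ℤ, |p.2 - (k : ℝ) * n| ≤ m * (t : ℝ)} := by
  ext p
  constructor
  · intro hp
    rw [Set.mem_iUnion₂] at hp
    obtain ⟨v, hv, q, hq, hqp⟩ := hp
    obtain ⟨I, J, rfl⟩ := hv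
    obtain ⟨i, hi, _, h2l, h2u⟩ := (mem_staircase_iff hm).mp hq
    have hit : (i : ℝ) ≤ (t : ℝ) := by exact_mod_cast (Finset.mem_Icc.mp hi).2
    refine ⟨J, ?_⟩
    have hp2 : p.2 = q.2 + n * (J : ℝ) := by rw [← hqp]; rfl
    have : |p.2 - (J : ℝ) * n| = |q.2| := by rw [hp2]; ring_nf
    rw [this]
    calc |q.2| ≤ m * (i : ℝ) := h2u
    _ ≤ m * (t : ℝ) := by nlinarith
  · rintro ⟨k, hk⟩
    set Y := |p.2 - (k : ℝ) * n| with hY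
    have hY0 : 0 ≤ Y := abs_nonneg _
    set i : ℕ := max 1 ⌈Y / m⌉₊ with hidef
    have hi1 : 1 ≤ i := le_max_left _ _
    have hi1' : (1:ℝ) ≤ (i:ℝ) := by exact_mod_cast hi1
    have hit : i ≤ t := by
      refine max_le ht ?_
      exact Nat.ceil_le.mpr (by rw [div_le_iff₀ hm]; linarith [hk])
    have hYu : Y ≤ m * (i : ℝ) := by
      have h1 : Y / m ≤ (⌈Y / m⌉₊ : ℝ) := Nat.le_ceil _
      have h2 : ((⌈Y / m⌉₊ : ℕ) : ℝ) ≤ (i : ℝ) := by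
        exact_mod_cast le_max_right 1 ⌈Y / m⌉₊
      rw [div_le_iff₀ hm] at h1; nlinarith
    have hYl : m * ((i : ℝ) - 1) ≤ Y := by
      rcases eq_or_lt_of_le hi1 with h | h
      · rw [← h]; norm_num; exact hY0
      · have hceil : i = ⌈Y / m⌉₊ := by
          rcases max_choice 1 ⌈Y / m⌉₊ with h' | h'
          · omega
          · exact h'
        have : (i - 1 : ℕ) < ⌈Y / m⌉₊ := by omega
        have h3 : ((i - 1 : ℕ) : ℝ) < Y / m := Nat.lt_ceil.mp this
        have h4 : ((i - 1 : ℕ) : ℝ) = (i : ℝ) - 1 := by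
          push_cast [Nat.cast_sub hi1]; ring
        rw [h4, lt_div_iff₀ hm] at h3; nlinarith
    -- horizontal placement
    set u := p.1 - m * (k : ℝ) with hu
    have h2m : (0:ℝ) < 2 * m := by linarith
    set J : ℤ := ⌊(u - m * ((i : ℝ) - 1)) / (2 * m)⌋ with hJ
    have hJle : 2 * m * (J : ℝ) ≤ u - m * ((i : ℝ) - 1) := by
      have := Int.floor_le ((u - m * ((i : ℝ) - 1)) / (2 * m))
      rw [← hJ] at this
      calc 2 * m * (J : ℝ) ≤ 2 * m * ((u - m * ((i : ℝ) - 1)) / (2 * m)) := by nlinarith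
      _ = u - m * ((i : ℝ) - 1) := by field_simp
    have hJgt : u - m * ((i : ℝ) - 1) < 2 * m * ((J : ℝ) + 1) := by
      have := Int.lt_floor_add_one ((u - m * ((i : ℝ) - 1)) / (2 * m))
      rw [← hJ] at this
      calc u - m * ((i : ℝ) - 1) = 2 * m * ((u - m * ((i : ℝ) - 1)) / (2 * m)) := by field_simp
      _ < 2 * m * ((J : ℝ) + 1) := by nlinarith
    -- choose the translate index I and the point q
    have key : ∃ I : ℤ, m * ((i : ℝ) - 1) ≤ |u - 2 * m * (I : ℝ)| ∧
        |u - 2 * m * (I : ℝ)| ≤ m * (i : ℝ) := by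
      rcases le_or_gt (u - 2 * m * (J : ℝ)) (m * (i : ℝ)) with hc | hc
      · refine ⟨J, ?_, ?_⟩
        · rw [abs_of_nonneg (by nlinarith)]; linarith
        · rw [abs_of_nonneg (by nlinarith)]; exact hc
      · have hnn : (0:ℝ) ≤ m * ((i:ℝ) - 1) := by nlinarith
        have hw1 : u - 2 * m * ((J:ℝ) + (i:ℝ)) ≤ -(m * ((i:ℝ) - 1)) := by nlinarith
        have hw2 : -(m * (i:ℝ)) ≤ u - 2 * m * ((J:ℝ) + (i:ℝ)) := by nlinarith
        have hw0 : u - 2 * m * ((J:ℝ) + (i:ℝ)) ≤ 0 := by linarith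
        refine ⟨J + (i : ℤ), ?_, ?_⟩ <;> push_cast <;>
          rw [abs_of_nonpos hw0] <;> linarith
    obtain ⟨I, hIl, hIu⟩ := key
    rw [Set.mem_iUnion₂]
    refine ⟨(2 * m * (I : ℝ) + m * (k : ℝ), n * (k : ℝ)), ⟨I, k, rfl⟩,
      (u - 2 * m * (I : ℝ), p.2 - n * (k : ℝ)), ?_, ?_⟩
    · rw [mem_staircase_iff hm]
      refine ⟨i, Finset.mem_Icc.mpr ⟨hi1, hit⟩, ⟨hIl, hIu⟩, ?_, ?_⟩
      · rw [show |p.2 - n * (k : ℝ)| = Y by rw [hY]; ring_nf]; exact hYl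
      · rw [show |p.2 - n * (k : ℝ)| = Y by rw [hY]; ring_nf]; exact hYu
    · show (_ + _, _ + _) = p
      rw [hu]; ext <;> simp <;> ring
end
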